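/- arXiv:0707.2421 — 3 statements merged into one kernel-verified Lean document; each statement's English description precedes it below -/
import Mathlib

section
/- Let P be a two-color grid poset that decomposes as P = P1 ◁ P2 ◁ ... ◁ Pk, let L = J_color(P) and, for 1 ≤ i ≤ k, let L_i = J_color(P_i). Then for every order ideal s of P and every color γ ∈ {α, β}: ρ_γ(s) computed in L equals the sum over i = 1,...,k of ρ_γ(s ∩ P_i) computed in L_i; l_γ(s) computed in L equals the sum over i of l_γ(s ∩ P_i) computed in L_i; and consequently wt(s) computed in L equals the sum over i of wt(s ∩ P_i) computed in L_i. -/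
/-- The two colors (simple-root labels) `α` and `β`. -/
inductive TwoColor : Type
  | alpha : TwoColor
  | beta : TwoColor
  deriving DecidableEq

/-- Lengths of paths of `r`-edges ending at `t`. -/
def chainsEndingAt {V : Type*} (r : V → V → Prop) (t : V) : Set ℕ :=
  {n : ℕ | ∃ c : ℕ → V, c n = t ∧ ∀ i : ℕ, i < n → r (c i) (c (i + 1))}

/-- Lengths of paths of `r`-edges starting at `t`. -/
def chainsStartingAt {V : Type*} (r : V → V → Prop) (t : V) : Set ℕ :=
  {n : ℕ | ∃ c : ℕ → V, c 0 = t ∧ ∀ i : ℕ, i < n → r (c i) (c (i + 1))}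

/-- `ρ`: the maximum number of edges in a chain of `r`-edges ending at `t`. -/
noncomputable def rhoOf {V : Type*} (r : V → V → Prop) (t : V) : ℕ :=
  sSup (chainsEndingAt r t)

/-- `δ`: the maximum number of edges in a chain of `r`-edges starting at `t`. -/
noncomputable def deltaOf {V : Type*} (r : V → V → Prop) (t : V) : ℕ :=
  sSup (chainsStartingAt r t)

/-- `l = ρ + δ`. -/
noncomputable def lenOf {V : Type*} (r : V → V → Prop) (t : V) : ℕ :=
  rhoOf r t + deltaOf r t

/-- The weight `wt(t) = (ρ_α(t) − δ_α(t), ρ_β(t) − δ_β(t))` of an element of an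
edge-colored poset whose (colored) covering relations are given by `cov`. -/
noncomputable def wtOf {V : Type*} (cov : TwoColor → V → V → Prop) (t : V) : ℤ × ℤ :=
  ((rhoOf (cov TwoColor.alpha) t : ℤ) - (deltaOf (cov TwoColor.alpha) t : ℤ),
   (rhoOf (cov TwoColor.beta) t : ℤ) - (deltaOf (cov TwoColor.beta) t : ℤ))

/-- The structure condition for a `2 × 2` integer matrix `M` (given by its rows
`M γ` for `γ ∈ {α, β}`): along any covering edge of color `γ`, the weight changes by `M γ`. -/
def StructureCondition {V : Type*} (cov : TwoColor → V → V → Prop)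
    (M : TwoColor → ℤ × ℤ) : Prop :=
  ∀ (γ : TwoColor) (s t : V), cov γ s t → wtOf cov t = wtOf cov s + M γ

/-- The elements of the distributive lattice `J(P)`: order ideals (lower sets) of `P`. -/
abbrev OrderIdeal (V : Type*) [PartialOrder V] : Type _ := {I : Set V // IsLowerSet I}

/-- The colored covering relation of `J_color(P)` for a vertex-colored poset `P`:
`s ⋖ t` with color `γ` when `t ∖ s` is a single vertex of color `γ`. -/
def idealCov {V : Type*} [PartialOrder V] (vcolor : V → TwoColor) (γ : TwoColor)
    (s t : OrderIdeal V) : Prop :=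
  ∃ u : V, vcolor u = γ ∧ u ∉ s.1 ∧ t.1 = insert u s.1

/-- Two vertices are in the same connected component of the Hasse diagram of a
poset when they are joined by a path of covering edges (in either direction). -/
def HasseConnected {V : Type*} [PartialOrder V] (u v : V) : Prop :=
  Relation.ReflTransGen (fun x y : V => x ⋖ y ∨ y ⋖ x) u v

/-- `chain : P → {1, …, m}` is a chain function making the finite poset `P` a grid
poset: each fiber of `chain` is a chain of `P`, and along any covering relation
`u ⋖ v` either `chain u = chain v` or `chain u = chain v + 1`. -/
def IsGridPoset {V : Type*} [PartialOrder V] (m : ℕ) (chain : V → ℕ) : Prop :=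
  1 ≤ m ∧ (∀ v : V, 1 ≤ chain v ∧ chain v ≤ m) ∧
    (∀ i : ℕ, IsChain (· ≤ ·) {v : V | chain v = i}) ∧
    (∀ u v : V, u ⋖ v → chain u = chain v ∨ chain u = chain v + 1)

/-- `color` is a two-color function for the grid poset `(P, chain)`: it is constant
on the fibers of `chain`, and vertices in the same connected component of the Hasse
diagram lying on adjacent chains get different colors. -/
def IsTwoColoring {V : Type*} [PartialOrder V] (chain : V → ℕ) (color : V → TwoColor) : Prop :=
  (∀ u v : V, chain u = chain v → color u = color v) ∧
  (∀ u v : V, HasseConnected u v → chain u = chain v + 1 → color u ≠ color v)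

/-- `idx` exhibits the decomposition `P = P₁ ◁ P₂ ◁ ⋯ ◁ P_k`, where
`P_i = idx⁻¹(i)`: each prefix is an order ideal of the remaining poset
(equivalently, `idx` is monotone), each piece is nonempty, and whenever `u` is a
maximal (resp. minimal) element of the piece `P_i` and `v` is a maximal
(resp. minimal) element of the union of the later pieces, `chain u ≤ chain v`. -/
def IsDecomposition {V : Type*} [PartialOrder V] {k : ℕ} (chain : V → ℕ)
    (idx : V → Fin k) : Prop :=
  (∀ u v : V, u ≤ v → idx u ≤ idx v) ∧
  (∀ i : Fin k, ∃ v : V, idx v = i) ∧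
  (∀ (i : Fin k) (u v : V), idx u = i → i < idx v →
      (∀ w : V, idx w = i → ¬u < w) → (∀ w : V, i < idx w → ¬v < w) → chain u ≤ chain v) ∧
  (∀ (i : Fin k) (u v : V), idx u = i → i < idx v →
      (∀ w : V, idx w = i → ¬w < u) → (∀ w : V, i < idx w → ¬w < v) → chain u ≤ chain v)

/-- The restriction `s ∩ P_i` of an order ideal `s` of `P` to the piece
`P_i = idx⁻¹(i)`, as an order ideal of the subposet `P_i`. -/
def restrictIdeal {V : Type*} [PartialOrder V] {k : ℕ} (idx : V → Fin k)
    (s : OrderIdeal V) (i : Fin k) : OrderIdeal {v : V // idx v = i} :=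
  ⟨{x : {v : V // idx v = i} | (x : V) ∈ s.1}, fun _ _ hba ha => s.2 hba ha⟩

/-- The restriction of the vertex coloring to the piece `P_i = idx⁻¹(i)`. -/
def subColor {V : Type*} {k : ℕ} (idx : V → Fin k) (color : V → TwoColor) (i : Fin k)
    (x : {v : V // idx v = i}) : TwoColor :=
  color x.1

/-! In `J(P)` a `γ`-colored chain ending at `s` removes elements of `s` one at a time, each
maximal in what is left, so the longest one removes exactly the elements of `s` whose up-set
within `s` is `γ`-colored; dually `δ_γ(s)` counts the elements outside `s` whose down-set outside
`s` is `γ`-colored. Membership in these sets can be decided inside the element's own piece: if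
`u ≤ v ∈ s` with `v` in a later piece, the condition on maximal elements of the decomposition,
together with the fact that `chain` drops by at most one along covers, gives `y ≥ u` in the piece
of `u` on the same chain as `v`; `y` and `v` are comparable and share their color, so `y` already
witnesses any failure of the condition. Hence the sets split along the pieces and the counts add.
-/

section Chains

variable {V : Type*} {r : V → V → Prop}

theorem chainsStartingAt_eq_chainsEndingAt_flip (t : V) :
    chainsStartingAt r t = chainsEndingAt (flip r) t := by
  have reverse : ∀ {q : V → V → Prop} {n : ℕ} {c : ℕ → V},
      (∀ i < n, q (c i) (c (i + 1))) → ∀ i < n, flip q (c (n - i)) (c (n - (i + 1))) := by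
    intro q n c h i hi
    simpa [flip, show n - i = n - (i + 1) + 1 by omega] using h (n - (i + 1)) (by omega)
  ext n
  constructor
  · rintro ⟨c, hc, h⟩
    exact ⟨fun i => c (n - i), by simpa using hc, reverse h⟩
  · rintro ⟨c, hc, h⟩
    exact ⟨fun i => c (n - i), by simpa using hc, fun i hi => by simpa using reverse h i hi⟩

theorem deltaOf_eq_rhoOf_flip (t : V) : deltaOf r t = rhoOf (flip r) t := by
  rw [deltaOf, rhoOf, chainsStartingAt_eq_chainsEndingAt_flip]

theorem rhoOf_eq_of_rank {f : V → ℕ} (hstep : ∀ s t, r s t → f t = f s + 1)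
    (hdown : ∀ t, f t ≠ 0 → ∃ s, r s t) (t : V) : rhoOf r t = f t := by
  have bound : ∀ n ∈ chainsEndingAt r t, n ≤ f t := by
    rintro n ⟨c, rfl, hc⟩
    suffices ∀ i ≤ n, i ≤ f (c i) from this n le_rfl
    intro i hi
    induction i with
    | zero => exact Nat.zero_le _
    | succ i ih => rw [hstep _ _ (hc i hi)]; exact Nat.succ_le_succ (ih (by omega))
  have attained : ∀ n t, f t = n → n ∈ chainsEndingAt r t := by
    intro n
    induction n with
    | zero => exact fun t _ => ⟨fun _ => t, rfl, fun i hi => absurd hi (Nat.not_lt_zero i)⟩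
    | succ n ih =>
      intro t ht
      obtain ⟨s, hst⟩ := hdown t (by omega)
      obtain ⟨c, hcn, hc⟩ := ih s (by have := hstep s t hst; omega)
      refine ⟨Function.update c (n + 1) t, by simp, fun i hi => ?_⟩
      rcases Nat.lt_succ_iff_lt_or_eq.mp hi with hi | rfl
      · simpa [Function.update_apply, show i ≠ n + 1 by omega, show i ≠ n by omega]
          using hc i hi
      · simpa [hcn] using hst
  exact (IsGreatest.csSup_eq ⟨attained _ t rfl, bound⟩)

end Chains

theorem sum_ncard_preimage_val_fiber {V ι : Type*} [Finite V] [Fintype ι] (f : V → ι)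
    (A : Set V) : ∑ i, (Subtype.val ⁻¹' A : Set {v // f v = i}).ncard = A.ncard := by
  have hpiece (i : ι) :
      (Subtype.val ⁻¹' A : Set {v // f v = i}).ncard = (A ∩ {v | f v = i}).ncard := by
    rw [← Set.ncard_image_of_injective _ Subtype.val_injective,
      Set.image_preimage_eq_inter_range, Subtype.range_coe_subtype]
  have hunion : A = ⋃ i, A ∩ {v | f v = i} := by ext; simp
  conv_rhs => rw [hunion]
  rw [Set.ncard_iUnion_of_finite (fun _ => Set.toFinite _), finsum_eq_sum_of_fintype]
  · simp only [hpiece]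
  · intro i j hij
    exact Set.disjoint_left.2 fun v hi hj => hij (hi.2.symm.trans hj.2)

section Ideals

variable {V : Type*} [PartialOrder V] (color : V → TwoColor) (γ : TwoColor)

def removableSet (s : Set V) : Set V :=
  {u | u ∈ s ∧ ∀ v ∈ s, u ≤ v → color v = γ}

def addableSet (s : Set V) : Set V :=
  {u | u ∉ s ∧ ∀ v ∉ s, v ≤ u → color v = γ}

variable {color γ}

theorem removableSet_eq_insert {s t : OrderIdeal V} {u : V} (hu : color u = γ) (hus : u ∉ s.1)
    (ht : t.1 = insert u s.1) :
    removableSet color γ t.1 = insert u (removableSet color γ s.1) := by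
  ext x
  simp only [removableSet, ht, Set.mem_insert_iff, Set.mem_ofPred_eq, forall_eq_or_imp]
  constructor
  · rintro ⟨rfl | hx, -, hall⟩
    · exact Or.inl rfl
    · exact Or.inr ⟨hx, hall⟩
  · rintro (rfl | ⟨hx, hall⟩)
    · exact ⟨Or.inl rfl, fun _ => hu, fun v hv huv => absurd (s.2 huv hv) hus⟩
    · exact ⟨Or.inr hx, fun _ => hu, hall⟩

theorem addableSet_eq_insert {s t : OrderIdeal V} {u : V} (hu : color u = γ) (hus : u ∉ s.1)
    (ht : t.1 = insert u s.1) :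
    addableSet color γ s.1 = insert u (addableSet color γ t.1) := by
  ext x
  simp only [addableSet, ht, Set.mem_insert_iff, Set.mem_ofPred_eq, not_or]
  constructor
  · rintro ⟨hxs, hall⟩
    by_cases hxu : x = u
    · exact Or.inl hxu
    · exact Or.inr ⟨⟨hxu, hxs⟩, fun v ⟨_, hvs⟩ hvx => hall v hvs hvx⟩
  · rintro (rfl | ⟨⟨-, hxs⟩, hall⟩)
    · refine ⟨hus, fun v hvs hvx => ?_⟩
      have hvt : v ∈ t.1 := t.2 hvx (by rw [ht]; exact Set.mem_insert _ _)
      rw [ht] at hvt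
      rcases hvt with rfl | hv
      · exact hu
      · exact absurd hv hvs
    · refine ⟨hxs, fun v hvs hvx => ?_⟩
      by_cases hvu : v = u
      · exact hvu ▸ hu
      · exact hall v ⟨hvu, hvs⟩ hvx

variable [Finite V]

theorem exists_idealCov_of_removableSet_nonempty {t : OrderIdeal V}
    (h : (removableSet color γ t.1).Nonempty) :
    ∃ s, idealCov color γ s t := by
  obtain ⟨x, hxt, hx⟩ := h
  obtain ⟨u, hxu, hu⟩ := t.1.toFinite.exists_le_maximal hxt
  refine ⟨⟨t.1 \ {u}, fun a b hba ha => ⟨t.2 hba ha.1, ?_⟩⟩,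
    u, hx u hu.1 hxu, by simp, ?_⟩
  · rintro rfl
    exact ha.2 (hu.eq_of_le ha.1 hba).symm
  · simp [Set.insert_eq_of_mem hu.1]

theorem exists_idealCov_of_addableSet_nonempty {s : OrderIdeal V}
    (h : (addableSet color γ s.1).Nonempty) :
    ∃ t, idealCov color γ s t := by
  obtain ⟨x, hxs, hx⟩ := h
  obtain ⟨u, hux, hu⟩ := (s.1ᶜ).toFinite.exists_le_minimal hxs
  refine ⟨⟨insert u s.1, fun a b hba ha => ?_⟩, u, hx u hu.1 hux, hu.1, rfl⟩
  rcases ha with rfl | ha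
  · by_contra hb
    exact hb (Or.inl (hu.eq_of_le (fun h => hb (Or.inr h)) hba))
  · exact Or.inr (s.2 hba ha)

theorem rhoOf_idealCov (s : OrderIdeal V) :
    rhoOf (idealCov color γ) s = (removableSet color γ s.1).ncard := by
  refine rhoOf_eq_of_rank (fun s t ⟨u, hu, hus, ht⟩ => ?_)
    (fun t ht => exists_idealCov_of_removableSet_nonempty (Set.nonempty_of_ncard_ne_zero ht)) s
  rw [removableSet_eq_insert hu hus ht, Set.ncard_insert_of_notMem (fun h => hus h.1)]

theorem deltaOf_idealCov (s : OrderIdeal V) :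
    deltaOf (idealCov color γ) s = (addableSet color γ s.1).ncard := by
  rw [deltaOf_eq_rhoOf_flip]
  refine rhoOf_eq_of_rank (fun s t ⟨u, hu, hus, ht⟩ => ?_)
    (fun t ht => exists_idealCov_of_addableSet_nonempty (Set.nonempty_of_ncard_ne_zero ht)) s
  rw [addableSet_eq_insert hu hus ht, Set.ncard_insert_of_notMem (fun h => h.1 (by simp [ht]))]

end Ideals

section Grid

variable {V : Type*} [PartialOrder V] [Finite V] {chain : V → ℕ}

theorem chain_antitone_of_covBy
    (hcov : ∀ u v : V, u ⋖ v → chain u = chain v ∨ chain u = chain v + 1)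
    {u x : V} (hux : u ≤ x) : chain x ≤ chain u := by
  induction x using WellFoundedLT.induction with
  | _ x ih =>
    rcases hux.eq_or_lt with rfl | hlt
    · exact le_rfl
    obtain ⟨y, huy, hyx⟩ := hlt.exists_le_covby
    have := hcov y x hyx
    have := ih y hyx.lt huy
    omega

theorem exists_chain_eq_of_le
    (hcov : ∀ u v : V, u ⋖ v → chain u = chain v ∨ chain u = chain v + 1)
    {u x : V} (hux : u ≤ x) {c : ℕ} (hxc : chain x ≤ c) (hcu : c ≤ chain u) :
    ∃ y, u ≤ y ∧ y ≤ x ∧ chain y = c := by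
  induction x using WellFoundedLT.induction with
  | _ x ih =>
    rcases hux.eq_or_lt with rfl | hlt
    · exact ⟨u, le_rfl, le_rfl, (le_antisymm hcu hxc).symm⟩
    rcases hxc.eq_or_lt with rfl | hxc
    · exact ⟨x, hux, le_rfl, rfl⟩
    obtain ⟨y, huy, hyx⟩ := hlt.exists_le_covby
    obtain ⟨z, huz, hzy, rfl⟩ := ih y hyx.lt huy (by have := hcov y x hyx; omega)
    exact ⟨z, huz, hzy.trans hyx.le, rfl⟩

variable {m k : ℕ} {color : V → TwoColor} {idx : V → Fin k}

theorem color_eq_of_le_of_piece (hgrid : IsGridPoset m chain)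
    (hcolor : IsTwoColoring chain color) (hdec : IsDecomposition chain idx) {γ : TwoColor}
    {s : OrderIdeal V} {u : V} (H : ∀ x ∈ s.1, idx x = idx u → u ≤ x → color x = γ) {v : V}
    (hv : v ∈ s.1) (huv : u ≤ v) :
    color v = γ := by
  by_contra hne
  have hlt : idx u < idx v :=
    (hdec.1 u v huv).lt_of_ne fun h => hne (H v hv h.symm huv)
  obtain ⟨x, hux, hx⟩ := Finite.exists_le_maximal (p := fun w => idx w = idx u) rfl
  obtain ⟨w, hvw, hw⟩ := Finite.exists_le_maximal (p := fun _ : V => True) trivial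
  have hxw : chain x ≤ chain w :=
    hdec.2.2.1 _ x w hx.1 (hlt.trans_le (hdec.1 v w hvw))
      (fun _ h => hx.not_gt h) (fun _ _ => hw.not_gt trivial)
  have hcov := hgrid.2.2.2
  obtain ⟨y, huy, hyx, hyv⟩ := exists_chain_eq_of_le hcov hux
    (hxw.trans (chain_antitone_of_covBy hcov hvw)) (chain_antitone_of_covBy hcov huv)
  have hyu : idx y = idx u :=
    le_antisymm (hx.1 ▸ hdec.1 y x hyx) (hdec.1 u y huy)
  rcases (hgrid.2.2.1 (chain v)).total hyv rfl with hyv' | hvy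
  · exact hne (hcolor.1 v y hyv.symm ▸ H y (s.2 hyv' hv) hyu huy)
  · exact (hdec.1 v y hvy).not_gt (hyu ▸ hlt)

theorem color_eq_of_ge_of_piece (hgrid : IsGridPoset m chain)
    (hcolor : IsTwoColoring chain color) (hdec : IsDecomposition chain idx) {γ : TwoColor}
    {s : OrderIdeal V} {u : V} (H : ∀ x ∉ s.1, idx x = idx u → x ≤ u → color x = γ) {v : V}
    (hv : v ∉ s.1) (hvu : v ≤ u) :
    color v = γ := by
  by_contra hne
  -- take the counterexample in the latest piece: the argument below produces one in a later piece
  obtain ⟨v, ⟨hv, hvu, hne⟩, hvmax⟩ := Set.Finite.exists_maximalFor idx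
    {v | v ∉ s.1 ∧ v ≤ u ∧ color v ≠ γ} (Set.toFinite _) ⟨v, hv, hvu, hne⟩
  have hlt : idx v < idx u :=
    (hdec.1 v u hvu).lt_of_ne fun h => hne (H v hv h hvu)
  obtain ⟨a, hav, ha⟩ := Finite.exists_le_minimal (p := fun w => idx w = idx v) rfl
  obtain ⟨z, hzu, hz⟩ := Finite.exists_le_minimal (p := fun w => idx v < idx w) hlt
  have haz : chain a ≤ chain z :=
    hdec.2.2.2 _ a z ha.1 hz.1 (fun _ h => ha.not_lt h) (fun _ h => hz.not_lt h)
  have hcov := hgrid.2.2.2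
  obtain ⟨y, hzy, hyu, hyv⟩ := exists_chain_eq_of_le hcov hzu (chain_antitone_of_covBy hcov hvu)
    ((chain_antitone_of_covBy hcov hav).trans haz)
  have hvy : idx v < idx y := hz.1.trans_le (hdec.1 z y hzy)
  rcases (hgrid.2.2.1 (chain v)).total hyv rfl with hyv' | hvy'
  · exact (hdec.1 y v hyv').not_gt hvy
  · have hy_bad : y ∈ {v | v ∉ s.1 ∧ v ≤ u ∧ color v ≠ γ} :=
      ⟨fun hy => hv (s.2 hvy' hy), hyu, hcolor.1 y v hyv ▸ hne⟩
    exact (hvmax hy_bad hvy.le).not_gt hvy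

theorem removableSet_restrictIdeal (hgrid : IsGridPoset m chain)
    (hcolor : IsTwoColoring chain color) (hdec : IsDecomposition chain idx) (s : OrderIdeal V)
    (γ : TwoColor) (i : Fin k) :
    removableSet (subColor idx color i) γ (restrictIdeal idx s i).1 =
      Subtype.val ⁻¹' removableSet color γ s.1 := by
  ext x
  refine ⟨fun ⟨hx, hall⟩ => ⟨hx, fun v hv hxv => ?_⟩,
    fun ⟨hx, hall⟩ => ⟨hx, fun y hy hxy => hall y hy hxy⟩⟩
  exact color_eq_of_le_of_piece hgrid hcolor hdec
    (fun w hw hwi hxw => hall ⟨w, hwi.trans x.2⟩ hw hxw) hv hxv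

theorem addableSet_restrictIdeal (hgrid : IsGridPoset m chain)
    (hcolor : IsTwoColoring chain color) (hdec : IsDecomposition chain idx) (s : OrderIdeal V)
    (γ : TwoColor) (i : Fin k) :
    addableSet (subColor idx color i) γ (restrictIdeal idx s i).1 =
      Subtype.val ⁻¹' addableSet color γ s.1 := by
  ext x
  refine ⟨fun ⟨hx, hall⟩ => ⟨hx, fun v hv hvx => ?_⟩,
    fun ⟨hx, hall⟩ => ⟨hx, fun y hy hyx => hall y hy hyx⟩⟩
  exact color_eq_of_ge_of_piece hgrid hcolor hdec
    (fun w hw hwi hwx => hall ⟨w, hwi.trans x.2⟩ hw hwx) hv hvx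

theorem rhoOf_idealCov_eq_sum (hgrid : IsGridPoset m chain)
    (hcolor : IsTwoColoring chain color) (hdec : IsDecomposition chain idx) (s : OrderIdeal V)
    (γ : TwoColor) :
    rhoOf (idealCov color γ) s =
      ∑ i, rhoOf (idealCov (subColor idx color i) γ) (restrictIdeal idx s i) := by
  simp only [rhoOf_idealCov, removableSet_restrictIdeal hgrid hcolor hdec,
    sum_ncard_preimage_val_fiber]

theorem deltaOf_idealCov_eq_sum (hgrid : IsGridPoset m chain)
    (hcolor : IsTwoColoring chain color) (hdec : IsDecomposition chain idx) (s : OrderIdeal V)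
    (γ : TwoColor) :
    deltaOf (idealCov color γ) s =
      ∑ i, deltaOf (idealCov (subColor idx color i) γ) (restrictIdeal idx s i) := by
  simp only [deltaOf_idealCov, addableSet_restrictIdeal hgrid hcolor hdec,
    sum_ncard_preimage_val_fiber]

end Grid

/-- Lemma 3.1(1): if the two-color grid poset `P` decomposes as
`P = P₁ ◁ P₂ ◁ ⋯ ◁ P_k`, then for every order ideal `s` of `P` and every color `γ`,
the statistics `ρ_γ`, `l_γ` and the weight `wt`, computed in the edge-colored lattice
`L = J_color(P)`, are the sums over `i` of the corresponding statistics of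
`s ∩ P_i` computed in `L_i = J_color(P_i)`. -/
theorem grid_decomposition_statistics {V : Type*} [PartialOrder V] [Fintype V]
    {m k : ℕ} (chain : V → ℕ) (color : V → TwoColor) (idx : V → Fin k)
    (hgrid : IsGridPoset m chain) (hcolor : IsTwoColoring chain color)
    (hdec : IsDecomposition chain idx)
    (s : OrderIdeal V) (γ : TwoColor) :
    rhoOf (idealCov color γ) s =
        (∑ i : Fin k, rhoOf (idealCov (subColor idx color i) γ) (restrictIdeal idx s i)) ∧
    lenOf (idealCov color γ) s =
        (∑ i : Fin k, lenOf (idealCov (subColor idx color i) γ) (restrictIdeal idx s i)) ∧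
    wtOf (idealCov color) s =
        (∑ i : Fin k, wtOf (idealCov (subColor idx color i)) (restrictIdeal idx s i)) := by
  have hrho := rhoOf_idealCov_eq_sum hgrid hcolor hdec s
  have hdelta := deltaOf_idealCov_eq_sum hgrid hcolor hdec s
  refine ⟨hrho γ, ?_, ?_⟩
  · simp only [lenOf, hrho, hdelta, Finset.sum_add_distrib]
  · simp only [wtOf, hrho, hdelta, Prod.ext_iff, Prod.fst_sum, Prod.snd_sum, Nat.cast_sum,
      Finset.sum_sub_distrib, and_self]
end

section
/- For all integers a, b ≥ 0, the edge-colored distributive lattice L_A2(a,b) of A2-semistandard tableaux of shape (a,b) satisfies the structure condition for the A2 Cartan matrix with rows M_α = (2,−1), M_β = (−1,2): for every covering edge S ⋖ T of color γ, wt(T) = wt(S) + M_γ. -/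
/-- A filling of the shape with `b` columns of length two (each recorded as
(top entry, bottom entry)) followed by `a` columns of length one. -/
abbrev TabT (a b : ℕ) : Type := (Fin b → ℕ × ℕ) × (Fin a → ℕ)

/-- `n_k(T)`: the number of entries of the tableau `T` equal to `k`. -/
def nkOf {m n : ℕ} (T : (Fin m → ℕ × ℕ) × (Fin n → ℕ)) (k : ℕ) : ℕ :=
  (Finset.univ.filter fun j : Fin m => (T.1 j).1 = k).card +
    (Finset.univ.filter fun j : Fin m => (T.1 j).2 = k).card +
    (Finset.univ.filter fun i : Fin n => T.2 i = k).card

/-- The set of `A2`-semistandard tableaux of shape `(a,b)`: entries from `{1,2,3}`,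
rows weakly increasing, columns strictly increasing. -/
def SA2 (a b : ℕ) : Set (TabT a b) :=
  {T | (∀ j : Fin b, 1 ≤ (T.1 j).1 ∧ (T.1 j).1 ≤ 3 ∧ 1 ≤ (T.1 j).2 ∧ (T.1 j).2 ≤ 3 ∧
          (T.1 j).1 < (T.1 j).2) ∧
       (∀ i : Fin a, 1 ≤ T.2 i ∧ T.2 i ≤ 3) ∧
       (∀ j j' : Fin b, j ≤ j' → (T.1 j).1 ≤ (T.1 j').1 ∧ (T.1 j).2 ≤ (T.1 j').2) ∧
       (∀ i i' : Fin a, i ≤ i' → T.2 i ≤ T.2 i') ∧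
       (∀ (j : Fin b) (i : Fin a), (T.1 j).1 ≤ T.2 i)}

/-- The set of `C2`-semistandard tableaux of shape `(a,b)`: entries from `{1,2,3,4}`,
rows weakly increasing, columns strictly increasing, no column equal to `(1,4)`,
and at most one column equal to `(2,3)`. -/
def SC2 (a b : ℕ) : Set (TabT a b) :=
  {T | (∀ j : Fin b, 1 ≤ (T.1 j).1 ∧ (T.1 j).1 ≤ 4 ∧ 1 ≤ (T.1 j).2 ∧ (T.1 j).2 ≤ 4 ∧
          (T.1 j).1 < (T.1 j).2) ∧
       (∀ i : Fin a, 1 ≤ T.2 i ∧ T.2 i ≤ 4) ∧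
       (∀ j j' : Fin b, j ≤ j' → (T.1 j).1 ≤ (T.1 j').1 ∧ (T.1 j).2 ≤ (T.1 j').2) ∧
       (∀ i i' : Fin a, i ≤ i' → T.2 i ≤ T.2 i') ∧
       (∀ (j : Fin b) (i : Fin a), (T.1 j).1 ≤ T.2 i) ∧
       (∀ j : Fin b, T.1 j ≠ (1, 4)) ∧
       (∀ j j' : Fin b, T.1 j = (2, 3) → T.1 j' = (2, 3) → j = j')}

/-- The restrictions of Figure 4.5 on a pair of adjacent length-two columns of a
`G2`-semistandard tableau. -/
def g2pair2 (c c' : ℕ × ℕ) : Prop :=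
  (c = (1, 4) → c' ≠ (1, 4) ∧ c' ≠ (1, 5) ∧ c' ≠ (1, 6) ∧ c' ≠ (1, 7)) ∧
  (c = (1, 5) → c' ≠ (1, 5) ∧ c' ≠ (1, 6) ∧ c' ≠ (1, 7)) ∧
  (c = (1, 6) → c' ≠ (1, 6) ∧ c' ≠ (1, 7) ∧ c' ≠ (2, 6) ∧ c' ≠ (2, 7)) ∧
  (c = (2, 6) → c' ≠ (2, 6) ∧ c' ≠ (2, 7)) ∧
  (c = (1, 7) → c' ≠ (1, 7) ∧ c' ≠ (2, 7) ∧ c' ≠ (3, 7) ∧ c' ≠ (4, 7)) ∧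
  (c = (2, 7) → c' ≠ (2, 7) ∧ c' ≠ (3, 7) ∧ c' ≠ (4, 7)) ∧
  (c = (3, 7) → c' ≠ (3, 7) ∧ c' ≠ (4, 7)) ∧
  (c = (4, 7) → c' ≠ (4, 7))

/-- The restrictions of Figure 4.5 on a length-two column followed by a
length-one column in a `G2`-semistandard tableau. -/
def g2pair1 (c : ℕ × ℕ) (e : ℕ) : Prop :=
  (c = (1, 4) → e ≠ 1) ∧
  (c = (1, 5) → e ≠ 1) ∧
  (c = (1, 6) → e ≠ 1 ∧ e ≠ 2) ∧
  (c = (2, 6) → e ≠ 2) ∧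
  (c = (1, 7) → e ≠ 1 ∧ e ≠ 2 ∧ e ≠ 3 ∧ e ≠ 4) ∧
  (c = (2, 7) → e ≠ 2 ∧ e ≠ 3 ∧ e ≠ 4) ∧
  (c = (3, 7) → e ≠ 3 ∧ e ≠ 4) ∧
  (c = (4, 7) → e ≠ 4)

/-- The set of `G2`-semistandard tableaux of shape `(a,b)`. -/
def SG2 (a b : ℕ) : Set (TabT a b) :=
  {T | (∀ j : Fin b, 1 ≤ (T.1 j).1 ∧ (T.1 j).1 ≤ 7 ∧ 1 ≤ (T.1 j).2 ∧ (T.1 j).2 ≤ 7 ∧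
          (T.1 j).1 < (T.1 j).2) ∧
       (∀ i : Fin a, 1 ≤ T.2 i ∧ T.2 i ≤ 7) ∧
       (∀ j j' : Fin b, j ≤ j' → (T.1 j).1 ≤ (T.1 j').1 ∧ (T.1 j).2 ≤ (T.1 j').2) ∧
       (∀ i i' : Fin a, i ≤ i' → T.2 i ≤ T.2 i') ∧
       (∀ (j : Fin b) (i : Fin a), (T.1 j).1 ≤ T.2 i) ∧
       (∀ i i' : Fin a, T.2 i = 4 → T.2 i' = 4 → i = i') ∧
       (∀ j : Fin b, T.1 j ≠ (2, 3) ∧ T.1 j ≠ (2, 4) ∧ T.1 j ≠ (3, 4) ∧ T.1 j ≠ (3, 5) ∧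
          T.1 j ≠ (4, 5) ∧ T.1 j ≠ (4, 6) ∧ T.1 j ≠ (5, 6)) ∧
       (∀ j j' : Fin b, (j' : ℕ) = (j : ℕ) + 1 → g2pair2 (T.1 j) (T.1 j')) ∧
       (∀ (j : Fin b) (i : Fin a), (j : ℕ) + 1 = b → (i : ℕ) = 0 → g2pair1 (T.1 j) (T.2 i))}
/-- The edge colors determined by tableau entries: for `A2`, the entry `1` gives
color `α` and the entry `2` gives color `β`. -/
def colEntA2 : ℕ → TwoColor := fun n => if n = 2 then TwoColor.beta else TwoColor.alpha

/-- For `C2`, entries `1` and `3` give color `α` and entry `2` gives color `β`. -/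
def colEntC2 : ℕ → TwoColor := fun n => if n = 2 then TwoColor.beta else TwoColor.alpha

/-- For `G2`, entries `1, 3, 4, 6` give color `α` and entries `2, 5` give color `β`. -/
def colEntG2 : ℕ → TwoColor :=
  fun n => if n = 2 ∨ n = 5 then TwoColor.beta else TwoColor.alpha

/-- The colored covering relation of a lattice of semistandard tableaux:
`T` covers `S` exactly when `S` is obtained from `T` by increasing a single
entry by `1`, and the edge is colored according to the entry of `T`
at the changed position (via `colEnt`). -/
def tabCov {a b : ℕ} (colEnt : ℕ → TwoColor) (SSet : Set (TabT a b)) (γ : TwoColor)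
    (S T : {T : TabT a b // T ∈ SSet}) : Prop :=
  (∃ j : Fin b, colEnt ((T.1.1 j).1) = γ ∧
      S.1.1 j = ((T.1.1 j).1 + 1, (T.1.1 j).2) ∧
      (∀ j' : Fin b, j' ≠ j → S.1.1 j' = T.1.1 j') ∧ S.1.2 = T.1.2) ∨
  (∃ j : Fin b, colEnt ((T.1.1 j).2) = γ ∧
      S.1.1 j = ((T.1.1 j).1, (T.1.1 j).2 + 1) ∧
      (∀ j' : Fin b, j' ≠ j → S.1.1 j' = T.1.1 j') ∧ S.1.2 = T.1.2) ∨
  (∃ i : Fin a, colEnt (T.1.2 i) = γ ∧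
      S.1.2 i = T.1.2 i + 1 ∧
      (∀ i' : Fin a, i' ≠ i → S.1.2 i' = T.1.2 i') ∧ S.1.1 = T.1.1)

/-- The colored covering relation of the lattice `L_A2(a,b)`. -/
def covA2 (a b : ℕ) (γ : TwoColor) (S T : {T : TabT a b // T ∈ SA2 a b}) : Prop :=
  tabCov colEntA2 (SA2 a b) γ S T

/-- The colored covering relation of the lattice `L_C2(a,b)`. -/
def covC2 (a b : ℕ) (γ : TwoColor) (S T : {T : TabT a b // T ∈ SC2 a b}) : Prop :=
  tabCov colEntC2 (SC2 a b) γ S T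

/-- The colored covering relation of the lattice `L_G2(a,b)`. -/
def covG2 (a b : ℕ) (γ : TwoColor) (S T : {T : TabT a b // T ∈ SG2 a b}) : Prop :=
  tabCov colEntG2 (SG2 a b) γ S T

/-- The `A2` Cartan matrix, given by its rows `M_α = (2,−1)`, `M_β = (−1,2)`. -/
def MA2 : TwoColor → ℤ × ℤ
  | TwoColor.alpha => (2, -1)
  | TwoColor.beta => (-1, 2)

/-- The `C2` Cartan matrix, given by its rows `M_α = (2,−1)`, `M_β = (−2,2)`. -/
def MC2 : TwoColor → ℤ × ℤ
  | TwoColor.alpha => (2, -1)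
  | TwoColor.beta => (-2, 2)

/-- The `G2` Cartan matrix, given by its rows `M_α = (2,−1)`, `M_β = (−3,2)`. -/
def MG2 : TwoColor → ℤ × ℤ
  | TwoColor.alpha => (2, -1)
  | TwoColor.beta => (-3, 2)

section Chains

variable {V : Type*} {r : V → V → Prop}

theorem isGreatest_chainsEndingAt (F : V → ℕ) (hF : ∀ s t, r s t → F t = F s + 1)
    (hE : ∀ t, 0 < F t → ∃ s, r s t) (t : V) :
    IsGreatest (chainsEndingAt r t) (F t) := by
  constructor
  · suffices ∀ n t, F t = n → n ∈ chainsEndingAt r t from this _ t rfl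
    intro n
    induction n with
    | zero => exact fun t _ => ⟨fun _ => t, rfl, fun i hi => absurd hi (Nat.not_lt_zero i)⟩
    | succ k ih =>
      intro t hFt
      obtain ⟨s, hst⟩ := hE t (by omega)
      obtain ⟨c, hck, hc⟩ := ih s (by have := hF s t hst; omega)
      refine ⟨Function.update c (k + 1) t, by simp, fun i hi => ?_⟩
      rcases Nat.lt_or_ge i k with hik | hik
      · simpa [Function.update_of_ne (show i ≠ k + 1 by omega),
          Function.update_of_ne (show i + 1 ≠ k + 1 by omega)] using hc i hik
      · obtain rfl : i = k := by omega
        simpa [hck] using hst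
  · rintro n ⟨c, rfl, hc⟩
    suffices ∀ i ≤ n, i ≤ F (c i) from this n le_rfl
    intro i
    induction i with
    | zero => exact fun _ => Nat.zero_le _
    | succ k ih =>
      intro hk
      have := hF (c k) (c (k + 1)) (hc k hk)
      have := ih (by omega)
      omega

theorem rhoOf_eq_of_potential (F : V → ℕ) (hF : ∀ s t, r s t → F t = F s + 1)
    (hE : ∀ t, 0 < F t → ∃ s, r s t) (t : V) : rhoOf r t = F t :=
  (isGreatest_chainsEndingAt F hF hE t).csSup_eq

theorem deltaOf_eq_of_potential (G : V → ℕ) (hG : ∀ s t, r s t → G s = G t + 1)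
    (hE : ∀ s, 0 < G s → ∃ t, r s t) (s : V) : deltaOf r s = G s := by
  rw [deltaOf, chainsStartingAt_eq_chainsEndingAt_flip]
  exact rhoOf_eq_of_potential (r := flip r) G (fun s t h => hG t s h) hE s

end Chains

theorem Monotone.update_of_le_of_le {ι α : Type*} [PartialOrder ι] [DecidableEq ι] [Preorder α]
    {f : ι → α} (hf : Monotone f) {i : ι} {v : α} (hlt : ∀ k < i, f k ≤ v)
    (hgt : ∀ k, i < k → v ≤ f k) : Monotone (Function.update f i v) := by
  intro k l hkl
  rcases hkl.eq_or_lt with rfl | hkl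
  · exact le_rfl
  rcases eq_or_ne k i with rfl | hk
  · simpa [Function.update_of_ne hkl.ne'] using hgt l hkl
  rcases eq_or_ne l i with rfl | hl
  · simpa [Function.update_of_ne hk] using hlt k hkl
  · simpa [Function.update_of_ne hk, Function.update_of_ne hl] using hf hkl.le

open Finset in
theorem card_filter_update_add {ι κ : Type*} [Fintype ι] [DecidableEq ι] (f : ι → κ) (j : ι)
    (v : κ) (p : κ → Prop) [DecidablePred p] :
    #{x | p (Function.update f j v x)} + (if p (f j) then 1 else 0) =
      #{x | p (f x)} + (if p v then 1 else 0) := by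
  simp only [card_filter]
  rw [← add_sum_erase _ _ (mem_univ j), ← add_sum_erase _ _ (mem_univ j),
    sum_congr rfl fun x hx => by rw [Function.update_of_ne (ne_of_mem_erase hx)]]
  simp only [Function.update_self]
  ring

section A2

open Finset Function

variable {a b : ℕ}

def entryCount (p : ℕ × ℕ → Prop) [DecidablePred p] (q : ℕ → Prop) [DecidablePred q]
    (T : TabT a b) : ℕ :=
  #{j | p (T.1 j)} + #{i | q (T.2 i)}

section entryCount

variable (p : ℕ × ℕ → Prop) [DecidablePred p] (q : ℕ → Prop) [DecidablePred q] (T : TabT a b)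

theorem entryCount_pos_iff : 0 < entryCount p q T ↔ (∃ j, p (T.1 j)) ∨ ∃ i, q (T.2 i) := by
  simp [entryCount, Nat.pos_iff_ne_zero, Finset.filter_eq_empty_iff, or_iff_not_imp_left]

theorem entryCount_update_fst (j : Fin b) (c : ℕ × ℕ) :
    entryCount p q (update T.1 j c, T.2) + (if p (T.1 j) then 1 else 0) =
      entryCount p q T + (if p c then 1 else 0) := by
  have := card_filter_update_add T.1 j c p
  simp only [entryCount]
  omega

theorem entryCount_update_snd (i : Fin a) (e : ℕ) :
    entryCount p q (T.1, update T.2 i e) + (if q (T.2 i) then 1 else 0) =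
      entryCount p q T + (if q e then 1 else 0) := by
  have := card_filter_update_add T.2 i e q
  simp only [entryCount]
  omega

end entryCount

theorem update_fst_mem_SA2 {T : TabT a b} (hT : T ∈ SA2 a b) {j : Fin b} {c : ℕ × ℕ}
    (hc : 1 ≤ c.1 ∧ c.1 ≤ 3 ∧ 1 ≤ c.2 ∧ c.2 ≤ 3 ∧ c.1 < c.2)
    (hlt : ∀ k < j, T.1 k ≤ c) (hgt : ∀ k, j < k → c ≤ T.1 k) (hrow : ∀ i, c.1 ≤ T.2 i) :
    (update T.1 j c, T.2) ∈ SA2 a b := by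
  obtain ⟨hcol, hsingle, hmono, hmono', hrow'⟩ := hT
  refine ⟨fun k => ?_, hsingle,
    fun k l hkl => Monotone.update_of_le_of_le (fun _ _ h => hmono _ _ h) hlt hgt hkl, hmono',
    fun k i => ?_⟩
  all_goals rcases eq_or_ne k j with rfl | hk
  all_goals simp_all [update_of_ne]

theorem update_snd_mem_SA2 {T : TabT a b} (hT : T ∈ SA2 a b) {i : Fin a} {e : ℕ}
    (he : 1 ≤ e ∧ e ≤ 3) (hlt : ∀ k < i, T.2 k ≤ e) (hgt : ∀ k, i < k → e ≤ T.2 k)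
    (hrow : ∀ j, (T.1 j).1 ≤ e) :
    (T.1, update T.2 i e) ∈ SA2 a b := by
  obtain ⟨hcol, hsingle, hmono, hmono', hrow'⟩ := hT
  refine ⟨hcol, fun k => ?_, hmono,
    fun k l hkl => Monotone.update_of_le_of_le (fun _ _ h => hmono' _ _ h) hlt hgt hkl,
    fun j k => ?_⟩
  all_goals rcases eq_or_ne k i with rfl | hk
  all_goals simp_all [update_of_ne]

theorem colEntA2_eq_alpha {n : ℕ} : colEntA2 n = .alpha ↔ n ≠ 2 := by
  simp [colEntA2]

theorem colEntA2_eq_beta {n : ℕ} : colEntA2 n = .beta ↔ n = 2 := by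
  simp [colEntA2]

variable {S T : {T : TabT a b // T ∈ SA2 a b}}

theorem covA2_alpha_cases (h : covA2 a b .alpha S T) :
    (∃ j, T.1.1 j = (1, 3) ∧ S.1 = (update T.1.1 j (2, 3), T.1.2)) ∨
      ∃ i, T.1.2 i = 1 ∧ S.1 = (T.1.1, update T.1.2 i 2) := by
  rcases h with ⟨j, hc, hSj, hag, h₂⟩ | ⟨j, hc, hSj, hag, -⟩ | ⟨i, hc, hSi, hag, h₁⟩
  all_goals rw [colEntA2_eq_alpha] at hc
  · have := T.2.1 j
    have := S.2.1 j
    rw [hSj] at this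
    have hTj : T.1.1 j = (1, 3) := Prod.ext (by simp; omega) (by simp; omega)
    exact Or.inl ⟨j, hTj, Prod.ext (eq_update_iff.2 ⟨by rw [hSj, hTj], hag⟩) h₂⟩
  · have := T.2.1 j
    have := S.2.1 j
    rw [hSj] at this
    omega
  · have := T.2.2.1 i
    have := S.2.2.1 i
    have hTi : T.1.2 i = 1 := by omega
    exact Or.inr ⟨i, hTi, Prod.ext h₁ (eq_update_iff.2 ⟨by rw [hSi, hTi], hag⟩)⟩

theorem covA2_beta_cases (h : covA2 a b .beta S T) :
    (∃ j, T.1.1 j = (1, 2) ∧ S.1 = (update T.1.1 j (1, 3), T.1.2)) ∨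
      ∃ i, T.1.2 i = 2 ∧ S.1 = (T.1.1, update T.1.2 i 3) := by
  rcases h with ⟨j, hc, hSj, hag, -⟩ | ⟨j, hc, hSj, hag, h₂⟩ | ⟨i, hc, hSi, hag, h₁⟩
  all_goals rw [colEntA2_eq_beta] at hc
  · have := S.2.1 j
    rw [hSj] at this
    omega
  · have := T.2.1 j
    have hTj : T.1.1 j = (1, 2) := Prod.ext (by simp; omega) (by simp; omega)
    exact Or.inl ⟨j, hTj, Prod.ext (eq_update_iff.2 ⟨by rw [hSj, hTj], hag⟩) h₂⟩
  · exact Or.inr ⟨i, hc, Prod.ext h₁ (eq_update_iff.2 ⟨by rw [hSi, hc], hag⟩)⟩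

def rhoAlphaA2 : TabT a b → ℕ := entryCount (· = (1, 3)) (· = 1)

def deltaAlphaA2 : TabT a b → ℕ := entryCount (· = (2, 3)) (· = 2)

def rhoBetaA2 : TabT a b → ℕ := entryCount (· = (1, 2)) (· = 2)

def deltaBetaA2 : TabT a b → ℕ := entryCount (· = (1, 3)) (· = 3)

theorem covA2_alpha_counts (h : covA2 a b .alpha S T) :
    rhoAlphaA2 T.1 = rhoAlphaA2 S.1 + 1 ∧ deltaAlphaA2 S.1 = deltaAlphaA2 T.1 + 1 ∧
      rhoBetaA2 S.1 + deltaBetaA2 T.1 = rhoBetaA2 T.1 + deltaBetaA2 S.1 + 1 := by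
  simp only [rhoAlphaA2, deltaAlphaA2, rhoBetaA2, deltaBetaA2]
  rcases covA2_alpha_cases h with ⟨j, hTj, hS⟩ | ⟨i, hTi, hS⟩ <;> rw [hS]
  · have h₁ := entryCount_update_fst (· = (1, 3)) (· = 1) T.1 j (2, 3)
    have h₂ := entryCount_update_fst (· = (2, 3)) (· = 2) T.1 j (2, 3)
    have h₃ := entryCount_update_fst (· = (1, 2)) (· = 2) T.1 j (2, 3)
    have h₄ := entryCount_update_fst (· = (1, 3)) (· = 3) T.1 j (2, 3)
    simp only [hTj] at h₁ h₂ h₃ h₄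
    norm_num at h₁ h₂ h₃ h₄
    omega
  · have h₁ := entryCount_update_snd (· = (1, 3)) (· = 1) T.1 i 2
    have h₂ := entryCount_update_snd (· = (2, 3)) (· = 2) T.1 i 2
    have h₃ := entryCount_update_snd (· = (1, 2)) (· = 2) T.1 i 2
    have h₄ := entryCount_update_snd (· = (1, 3)) (· = 3) T.1 i 2
    simp only [hTi] at h₁ h₂ h₃ h₄
    norm_num at h₁ h₂ h₃ h₄
    omega

theorem covA2_beta_counts (h : covA2 a b .beta S T) :
    rhoBetaA2 T.1 = rhoBetaA2 S.1 + 1 ∧ deltaBetaA2 S.1 = deltaBetaA2 T.1 + 1 ∧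
      rhoAlphaA2 S.1 + deltaAlphaA2 T.1 = rhoAlphaA2 T.1 + deltaAlphaA2 S.1 + 1 := by
  simp only [rhoAlphaA2, deltaAlphaA2, rhoBetaA2, deltaBetaA2]
  rcases covA2_beta_cases h with ⟨j, hTj, hS⟩ | ⟨i, hTi, hS⟩ <;> rw [hS]
  · have h₁ := entryCount_update_fst (· = (1, 3)) (· = 1) T.1 j (1, 3)
    have h₂ := entryCount_update_fst (· = (2, 3)) (· = 2) T.1 j (1, 3)
    have h₃ := entryCount_update_fst (· = (1, 2)) (· = 2) T.1 j (1, 3)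
    have h₄ := entryCount_update_fst (· = (1, 3)) (· = 3) T.1 j (1, 3)
    simp only [hTj] at h₁ h₂ h₃ h₄
    norm_num at h₁ h₂ h₃ h₄
    omega
  · have h₁ := entryCount_update_snd (· = (1, 3)) (· = 1) T.1 i 3
    have h₂ := entryCount_update_snd (· = (2, 3)) (· = 2) T.1 i 3
    have h₃ := entryCount_update_snd (· = (1, 2)) (· = 2) T.1 i 3
    have h₄ := entryCount_update_snd (· = (1, 3)) (· = 3) T.1 i 3
    simp only [hTi] at h₁ h₂ h₃ h₄
    norm_num at h₁ h₂ h₃ h₄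
    omega

theorem exists_covA2_alpha_below (T : {T : TabT a b // T ∈ SA2 a b})
    (h : 0 < rhoAlphaA2 T.1) : ∃ S, covA2 a b .alpha S T := by
  obtain ⟨hcol, hsingle, hmono, hmono', -⟩ := T.2
  by_cases hone : ∃ i, T.1.2 i = 1
  · obtain ⟨i, hi : T.1.2 i = 1, hlast⟩ := wellFounded_gt.has_min {i | T.1.2 i = 1} hone
    have hmem := update_snd_mem_SA2 T.2 (i := i) (e := 2) (by omega)
      (fun k hk => by have := hmono' k i hk.le; omega)
      (fun k hk => by
        have := hmono' i k hk.le
        have : T.1.2 k ≠ 1 := fun h' => hlast k h' hk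
        omega)
      (fun j => by have := hcol j; omega)
    exact ⟨⟨_, hmem⟩, Or.inr (Or.inr
      ⟨i, by simp [colEntA2, hi], by simp [hi], fun k hk => update_of_ne hk _ _, rfl⟩)⟩
  · have hex : ∃ j, T.1.1 j = (1, 3) := by
      simpa [rhoAlphaA2, entryCount_pos_iff, hone] using h
    obtain ⟨j, hj : T.1.1 j = (1, 3), hlast⟩ := wellFounded_gt.has_min {j | T.1.1 j = (1, 3)} hex
    push Not at hone
    have hmem := update_fst_mem_SA2 T.2 (j := j) (c := (2, 3)) (by decide)
      (fun k _ => by have := hcol k; exact ⟨by simp; omega, by simp; omega⟩)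
      (fun k hk => by
        have hjk := hmono j k hk.le
        have := hcol k
        have : ¬((T.1.1 k).1 = 1 ∧ (T.1.1 k).2 = 3) := fun h' => hlast k (Prod.ext_iff.2 h') hk
        rw [hj] at hjk
        exact ⟨by simp; omega, by simp; omega⟩)
      (fun i => by have := hsingle i; have := hone i; simp; omega)
    exact ⟨⟨_, hmem⟩, Or.inl
      ⟨j, by simp [colEntA2, hj], by simp [hj], fun k hk => update_of_ne hk _ _, rfl⟩⟩

theorem exists_covA2_alpha_above (T : {T : TabT a b // T ∈ SA2 a b})
    (h : 0 < deltaAlphaA2 T.1) : ∃ U, covA2 a b .alpha T U := by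
  obtain ⟨hcol, hsingle, hmono, hmono', -⟩ := T.2
  by_cases htwo : ∃ j, T.1.1 j = (2, 3)
  · obtain ⟨j, hj : T.1.1 j = (2, 3), hfirst⟩ := wellFounded_lt.has_min {j | T.1.1 j = (2, 3)} htwo
    have hmem := update_fst_mem_SA2 T.2 (j := j) (c := (1, 3)) (by decide)
      (fun k hk => by
        have hkj := hmono k j hk.le
        have := hcol k
        have : ¬((T.1.1 k).1 = 2 ∧ (T.1.1 k).2 = 3) := fun h' => hfirst k (Prod.ext_iff.2 h') hk
        rw [hj] at hkj
        exact ⟨by simp; omega, by simp; omega⟩)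
      (fun k hk => by
        have hjk := hmono j k hk.le
        have := hcol k
        rw [hj] at hjk
        exact ⟨by simp; omega, by simp; omega⟩)
      (fun i => (hsingle i).1)
    exact ⟨⟨_, hmem⟩, Or.inl
      ⟨j, by simp [colEntA2], by simp [hj], fun k hk => (update_of_ne hk _ _).symm, rfl⟩⟩
  · have hex : ∃ i, T.1.2 i = 2 := by
      simpa [deltaAlphaA2, entryCount_pos_iff, htwo] using h
    obtain ⟨i, hi : T.1.2 i = 2, hfirst⟩ := wellFounded_lt.has_min {i | T.1.2 i = 2} hex
    push Not at htwo
    have hmem := update_snd_mem_SA2 T.2 (i := i) (e := 1) (by omega)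
      (fun k hk => by
        have := hmono' k i hk.le
        have := hsingle k
        have : T.1.2 k ≠ 2 := fun h' => hfirst k h' hk
        omega)
      (fun k _ => (hsingle k).1)
      (fun j => by
        have := hcol j
        have : ¬((T.1.1 j).1 = 2 ∧ (T.1.1 j).2 = 3) := fun h' => htwo j (Prod.ext_iff.2 h')
        omega)
    exact ⟨⟨_, hmem⟩, Or.inr (Or.inr
      ⟨i, by simp [colEntA2], by simp [hi], fun k hk => (update_of_ne hk _ _).symm, rfl⟩)⟩

theorem exists_covA2_beta_below (T : {T : TabT a b // T ∈ SA2 a b})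
    (h : 0 < rhoBetaA2 T.1) : ∃ S, covA2 a b .beta S T := by
  obtain ⟨hcol, hsingle, hmono, hmono', -⟩ := T.2
  rcases (entryCount_pos_iff _ _ _).1 h with hex | hex
  · obtain ⟨j, hj : T.1.1 j = (1, 2), hlast⟩ := wellFounded_gt.has_min {j | T.1.1 j = (1, 2)} hex
    have hmem := update_fst_mem_SA2 T.2 (j := j) (c := (1, 3)) (by decide)
      (fun k hk => by
        have hkj := hmono k j hk.le
        have := hcol k
        rw [hj] at hkj
        exact ⟨by simp; omega, by simp; omega⟩)
      (fun k hk => by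
        have hjk := hmono j k hk.le
        have := hcol k
        have : ¬((T.1.1 k).1 = 1 ∧ (T.1.1 k).2 = 2) := fun h' => hlast k (Prod.ext_iff.2 h') hk
        rw [hj] at hjk
        exact ⟨by simp; omega, by simp; omega⟩)
      (fun i => (hsingle i).1)
    exact ⟨⟨_, hmem⟩, Or.inr (Or.inl
      ⟨j, by simp [colEntA2, hj], by simp [hj], fun k hk => update_of_ne hk _ _, rfl⟩)⟩
  · obtain ⟨i, hi : T.1.2 i = 2, hlast⟩ := wellFounded_gt.has_min {i | T.1.2 i = 2} hex
    have hmem := update_snd_mem_SA2 T.2 (i := i) (e := 3) (by omega)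
      (fun k _ => (hsingle k).2)
      (fun k hk => by
        have := hmono' i k hk.le
        have : T.1.2 k ≠ 2 := fun h' => hlast k h' hk
        omega)
      (fun j => (hcol j).2.1)
    exact ⟨⟨_, hmem⟩, Or.inr (Or.inr
      ⟨i, by simp [colEntA2, hi], by simp [hi], fun k hk => update_of_ne hk _ _, rfl⟩)⟩

theorem exists_covA2_beta_above (T : {T : TabT a b // T ∈ SA2 a b})
    (h : 0 < deltaBetaA2 T.1) : ∃ U, covA2 a b .beta T U := by
  obtain ⟨hcol, hsingle, hmono, hmono', -⟩ := T.2
  rcases (entryCount_pos_iff _ _ _).1 h with hex | hex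
  · obtain ⟨j, hj : T.1.1 j = (1, 3), hfirst⟩ := wellFounded_lt.has_min {j | T.1.1 j = (1, 3)} hex
    have hmem := update_fst_mem_SA2 T.2 (j := j) (c := (1, 2)) (by decide)
      (fun k hk => by
        have hkj := hmono k j hk.le
        have := hcol k
        have : ¬((T.1.1 k).1 = 1 ∧ (T.1.1 k).2 = 3) := fun h' => hfirst k (Prod.ext_iff.2 h') hk
        rw [hj] at hkj
        exact ⟨by simp; omega, by simp; omega⟩)
      (fun k _ => by have := hcol k; exact ⟨by simp; omega, by simp; omega⟩)
      (fun i => (hsingle i).1)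
    exact ⟨⟨_, hmem⟩, Or.inr (Or.inl
      ⟨j, by simp [colEntA2], by simp [hj], fun k hk => (update_of_ne hk _ _).symm, rfl⟩)⟩
  · obtain ⟨i, hi : T.1.2 i = 3, hfirst⟩ := wellFounded_lt.has_min {i | T.1.2 i = 3} hex
    have hmem := update_snd_mem_SA2 T.2 (i := i) (e := 2) (by omega)
      (fun k hk => by
        have := hsingle k
        have : T.1.2 k ≠ 3 := fun h' => hfirst k h' hk
        omega)
      (fun k hk => by have := hmono' i k hk.le; omega)
      (fun j => by have := hcol j; omega)
    exact ⟨⟨_, hmem⟩, Or.inr (Or.inr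
      ⟨i, by simp [colEntA2], by simp [hi], fun k hk => (update_of_ne hk _ _).symm, rfl⟩)⟩

theorem wtOf_covA2 (T : {T : TabT a b // T ∈ SA2 a b}) :
    wtOf (covA2 a b) T =
      ((rhoAlphaA2 T.1 : ℤ) - deltaAlphaA2 T.1, (rhoBetaA2 T.1 : ℤ) - deltaBetaA2 T.1) := by
  rw [wtOf,
    rhoOf_eq_of_potential (fun T => rhoAlphaA2 T.1) (fun _ _ h => (covA2_alpha_counts h).1)
      exists_covA2_alpha_below,
    deltaOf_eq_of_potential (fun T => deltaAlphaA2 T.1) (fun _ _ h => (covA2_alpha_counts h).2.1)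
      exists_covA2_alpha_above,
    rhoOf_eq_of_potential (fun T => rhoBetaA2 T.1) (fun _ _ h => (covA2_beta_counts h).1)
      exists_covA2_beta_below,
    deltaOf_eq_of_potential (fun T => deltaBetaA2 T.1) (fun _ _ h => (covA2_beta_counts h).2.1)
      exists_covA2_beta_above]

end A2

/-- For all `a, b ≥ 0`, the edge-colored distributive lattice `L_A2(a,b)` of
`A2`-semistandard tableaux of shape `(a,b)` satisfies the structure condition for
the `A2` Cartan matrix with rows `M_α = (2,−1)`, `M_β = (−1,2)`. -/
theorem A2_lattice_structure_condition (a b : ℕ) :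
    StructureCondition (covA2 a b) MA2 := by
  rintro (_ | _) S T h
  · obtain ⟨h₁, h₂, h₃⟩ := covA2_alpha_counts h
    rw [wtOf_covA2, wtOf_covA2, MA2, Prod.mk_add_mk, Prod.mk.injEq]
    omega
  · obtain ⟨h₁, h₂, h₃⟩ := covA2_beta_counts h
    rw [wtOf_covA2, wtOf_covA2, MA2, Prod.mk_add_mk, Prod.mk.injEq]
    omega
end

section
/- Fix integers a, b ≥ 0 and let P be the poset with elements u_1,...,u_{a+b}, t_1,...,t_b, w_{b+1},...,w_{a+b}, whose partial order is generated by the relations u_i < u_{i+1} for 1 ≤ i ≤ a+b−1, u_j < t_j for 1 ≤ j ≤ b, t_j < t_{j+1} for 1 ≤ j ≤ b−1, w_j < u_j for b+1 ≤ j ≤ a+b, and w_j < w_{j+1} for b+1 ≤ j ≤ a+b−1 (this is the A2-semistandard poset P_{A2}^{βα}(a,b), with each u_i colored α and each t_j and w_j colored β). For an order ideal I of P define tableau(I) to be the tableau of shape (a,b) whose j-th column, for 1 ≤ j ≤ b, is (2,3), (1,3), (1,2) according as the cardinality of I ∩ {u_j, t_j} is 0, 1, 2, and whose j-th column, for b+1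 ≤ j ≤ a+b, is (3), (2), (1) according as the cardinality of I ∩ {w_j, u_j} is 0, 1, 2. Then the map I ↦ tableau(I) is a bijection from the set of order ideals of P onto S_A2(a,b). -/
/-- An order ideal of the poset generated by the covering relations `r`:
a subset closed downward under the reflexive-transitive closure of `r`. -/
def IsIdealOf {V : Type*} (r : V → V → Prop) (I : Set V) : Prop :=
  ∀ x y : V, Relation.ReflTransGen r x y → y ∈ I → x ∈ I

/-- The elements of the `A2`-semistandard poset `P_A2^{βα}(a,b)`:
`Sum.inl i` is `u_{i+1}` (`0 ≤ i < a+b`), `Sum.inr (Sum.inl j)` is `t_{j+1}`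
(`0 ≤ j < b`), and `Sum.inr (Sum.inr k)` is `w_{b+1+k}` (`0 ≤ k < a`). -/
abbrev VA2 (a b : ℕ) : Type := Fin (a + b) ⊕ (Fin b ⊕ Fin a)

/-- The generating relations of the `A2`-semistandard poset `P_A2^{βα}(a,b)`:
`u_i < u_{i+1}`, `u_j < t_j` (`j ≤ b`), `t_j < t_{j+1}`, `w_j < u_j` (`j ≥ b+1`),
and `w_j < w_{j+1}`. -/
def relA2 (a b : ℕ) : VA2 a b → VA2 a b → Prop := fun x y =>
  match x, y with
  | Sum.inl i, Sum.inl i' => (i' : ℕ) = (i : ℕ) + 1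
  | Sum.inl i, Sum.inr (Sum.inl j) => (i : ℕ) = (j : ℕ)
  | Sum.inr (Sum.inl j), Sum.inr (Sum.inl j') => (j' : ℕ) = (j : ℕ) + 1
  | Sum.inr (Sum.inr k), Sum.inl i => (i : ℕ) = b + (k : ℕ)
  | Sum.inr (Sum.inr k), Sum.inr (Sum.inr k') => (k' : ℕ) = (k : ℕ) + 1
  | _, _ => False

/-- The tableau associated to an order ideal `I` of `P_A2^{βα}(a,b)`: the `j`-th
length-two column is `(2,3)`, `(1,3)`, `(1,2)` according as `|I ∩ {u_j, t_j}|` is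
`0`, `1`, `2`, and the `(b+k)`-th (length-one) column is `(3)`, `(2)`, `(1)`
according as `|I ∩ {w_{b+k}, u_{b+k}}|` is `0`, `1`, `2`. -/
noncomputable def tabA2 (a b : ℕ) (I : Set (VA2 a b)) : TabT a b :=
  (fun j : Fin b =>
    (fun n : ℕ => if n = 0 then ((2 : ℕ), (3 : ℕ)) else if n = 1 then (1, 3) else (1, 2))
      ((I ∩ {Sum.inl ⟨(j : ℕ), lt_of_lt_of_le j.isLt (Nat.le_add_left b a)⟩,
             Sum.inr (Sum.inl j)}).ncard),
   fun k : Fin a =>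
    (fun n : ℕ => if n = 0 then (3 : ℕ) else if n = 1 then 2 else 1)
      ((I ∩ {Sum.inr (Sum.inr k),
             Sum.inl ⟨b + (k : ℕ), by have := k.isLt; omega⟩}).ncard))

/-! The dictionary between ideals and tableaux is entrywise: `u_j ∈ I` iff the first-row entry
of column `j` is `1`, `t_j ∈ I` iff the second-row entry of column `j` is at most `2`, and
`w_j ∈ I` iff the first-row entry of column `j` is at most `2`. Each vertex is thus a pair
(box, level) and lies in the ideal iff the entry in the box is at most the level. Under this
dictionary the covering relations along the rows `u`, `t`, `w` become the weak increase of the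
rows, `u_j < t_j` becomes the strict increase of column `j`, and `w_j < u_j` holds because the
levels `1 < 2` refer to the same box. -/

theorem reflTransGen_of_fin_succ {α : Type*} {n : ℕ} (r : α → α → Prop) (f : Fin n → α)
    (h : ∀ i j : Fin n, (j : ℕ) = i + 1 → r (f i) (f j)) {i j : Fin n} (hij : i ≤ j) :
    Relation.ReflTransGen r (f i) (f j) := by
  obtain ⟨i, hi⟩ := i
  obtain ⟨j, hj⟩ := j
  rw [Fin.mk_le_mk] at hij
  induction j, hij using Nat.le_induction with
  | base => rfl
  | succ m _ ih => exact (ih (by omega)).tail (h ⟨m, by omega⟩ _ rfl)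

theorem isIdealOf_of_forall_rel {V : Type*} {r : V → V → Prop} {I : Set V}
    (h : ∀ x y, r x y → y ∈ I → x ∈ I) : IsIdealOf r I := by
  intro x y hxy
  induction hxy with
  | refl => exact id
  | tail _ hyz ih => exact ih ∘ h _ _ hyz

theorem Set.ncard_inter_pair_of_imp {α : Type*} {I : Set α} {x y : α} [Decidable (x ∈ I)]
    [Decidable (y ∈ I)] (hxy : x ≠ y) (h : y ∈ I → x ∈ I) :
    (I ∩ {x, y}).ncard = if y ∈ I then 2 else if x ∈ I then 1 else 0 := by
  by_cases hy : y ∈ I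
  · rw [Set.inter_eq_right.2 (Set.pair_subset (h hy) hy), Set.ncard_pair hxy, if_pos hy]
  by_cases hx : x ∈ I
  · rw [Set.inter_insert_of_mem hx, Set.inter_singleton_eq_empty.2 hy]
    simp [hx, hy]
  · rw [Set.inter_insert_of_notMem hx, Set.inter_singleton_eq_empty.2 hy]
    simp [hx, hy]

namespace A2

variable {a b : ℕ}

def topU (j : Fin b) : Fin (a + b) := ⟨j, lt_of_lt_of_le j.isLt (Nat.le_add_left b a)⟩

def singleU (k : Fin a) : Fin (a + b) := ⟨b + k, by omega⟩

def firstRow (T : TabT a b) (i : Fin (a + b)) : ℕ :=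
  if h : (i : ℕ) < b then (T.1 ⟨i, h⟩).1 else T.2 ⟨i - b, by omega⟩

theorem firstRow_topU (T : TabT a b) (j : Fin b) : firstRow T (topU j) = (T.1 j).1 :=
  dif_pos j.isLt

theorem firstRow_singleU (T : TabT a b) (k : Fin a) : firstRow T (singleU k) = T.2 k := by
  simp [firstRow, singleU]

theorem firstRow_mono {T : TabT a b} (hT : T ∈ SA2 a b) : Monotone (firstRow T) := by
  obtain ⟨-, -, hTop, hSingle, hTopSingle⟩ := hT
  intro i i' hii'
  rw [Fin.le_def] at hii'
  unfold firstRow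
  split_ifs with h h'
  · exact (hTop _ _ (Fin.mk_le_mk.2 hii')).1
  · exact hTopSingle _ _
  · omega
  · exact hSingle _ _ (Fin.mk_le_mk.2 (by omega))

def idealOfTab (T : TabT a b) : Set (VA2 a b)
  | .inl i => firstRow T i ≤ 1
  | .inr (.inl j) => (T.1 j).2 ≤ 2
  | .inr (.inr k) => T.2 k ≤ 2

@[simp]
theorem inl_mem_idealOfTab {T : TabT a b} {i : Fin (a + b)} :
    Sum.inl i ∈ idealOfTab T ↔ firstRow T i ≤ 1 := Iff.rfl

@[simp]
theorem inr_inl_mem_idealOfTab {T : TabT a b} {j : Fin b} :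
    Sum.inr (Sum.inl j) ∈ idealOfTab T ↔ (T.1 j).2 ≤ 2 := Iff.rfl

@[simp]
theorem inr_inr_mem_idealOfTab {T : TabT a b} {k : Fin a} :
    Sum.inr (Sum.inr k) ∈ idealOfTab T ↔ T.2 k ≤ 2 := Iff.rfl

theorem isIdealOf_idealOfTab {T : TabT a b} (hT : T ∈ SA2 a b) :
    IsIdealOf (relA2 a b) (idealOfTab T) := by
  have hRow := firstRow_mono hT
  obtain ⟨hCol, -, hTop, hSingle, -⟩ := hT
  refine isIdealOf_of_forall_rel ?_
  rintro (i | j | k) (i' | j' | k') hr hm <;> simp only [relA2] at hr <;>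
    simp only [inl_mem_idealOfTab, inr_inl_mem_idealOfTab, inr_inr_mem_idealOfTab] at hm ⊢
  · exact (hRow (Fin.le_def.2 (by omega))).trans hm
  · obtain rfl : i = topU j' := Fin.ext hr
    have := hCol j'
    rw [firstRow_topU]
    omega
  · exact (hTop _ _ (Fin.le_def.2 (by omega))).2.trans hm
  · obtain rfl : i' = singleU k := Fin.ext hr
    rw [firstRow_singleU] at hm
    omega
  · exact (hSingle _ _ (Fin.le_def.2 (by omega))).trans hm

theorem eq_topU_or_eq_singleU (i : Fin (a + b)) : (∃ j, i = topU j) ∨ ∃ k, i = singleU k := by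
  by_cases h : (i : ℕ) < b
  · exact .inl ⟨⟨i, h⟩, rfl⟩
  · exact .inr ⟨⟨i - b, by omega⟩, Fin.ext (by simp [singleU]; omega)⟩

section Ideal

variable {I : Set (VA2 a b)}

theorem inl_mem_of_le (hI : IsIdealOf (relA2 a b) I) {i i' : Fin (a + b)} (h : i ≤ i') :
    Sum.inl i' ∈ I → Sum.inl i ∈ I :=
  hI _ _ (reflTransGen_of_fin_succ _ Sum.inl (fun _ _ h => h) h)

theorem inr_inl_mem_of_le (hI : IsIdealOf (relA2 a b) I) {j j' : Fin b} (h : j ≤ j') :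
    Sum.inr (Sum.inl j') ∈ I → Sum.inr (Sum.inl j) ∈ I :=
  hI _ _ (reflTransGen_of_fin_succ _ (Sum.inr ∘ Sum.inl) (fun _ _ h => h) h)

theorem inr_inr_mem_of_le (hI : IsIdealOf (relA2 a b) I) {k k' : Fin a} (h : k ≤ k') :
    Sum.inr (Sum.inr k') ∈ I → Sum.inr (Sum.inr k) ∈ I :=
  hI _ _ (reflTransGen_of_fin_succ _ (Sum.inr ∘ Sum.inr) (fun _ _ h => h) h)

theorem inl_topU_mem_of_inr_inl_mem (hI : IsIdealOf (relA2 a b) I) (j : Fin b) :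
    Sum.inr (Sum.inl j) ∈ I → Sum.inl (topU j) ∈ I :=
  hI _ _ (.single rfl)

theorem inr_inr_mem_of_inl_singleU_mem (hI : IsIdealOf (relA2 a b) I) (k : Fin a) :
    Sum.inl (singleU k) ∈ I → Sum.inr (Sum.inr k) ∈ I :=
  hI _ _ (.single rfl)

open Classical in
theorem tabA2_fst (hI : IsIdealOf (relA2 a b) I) (j : Fin b) :
    (tabA2 a b I).1 j =
      (if Sum.inl (topU j) ∈ I then 1 else 2, if Sum.inr (Sum.inl j) ∈ I then 2 else 3) :=
  calc (tabA2 a b I).1 j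
      = (fun n : ℕ => if n = 0 then ((2 : ℕ), (3 : ℕ)) else if n = 1 then (1, 3) else (1, 2))
          (I ∩ {Sum.inl (topU j), Sum.inr (Sum.inl j)}).ncard := rfl
    _ = _ := by
      rw [Set.ncard_inter_pair_of_imp Sum.inl_ne_inr (inl_topU_mem_of_inr_inl_mem hI j)]
      split_ifs with ht hu
      exacts [rfl, absurd (inl_topU_mem_of_inr_inl_mem hI j ht) hu, rfl, rfl]

open Classical in
theorem tabA2_snd (hI : IsIdealOf (relA2 a b) I) (k : Fin a) :
    (tabA2 a b I).2 k =
      if Sum.inl (singleU k) ∈ I then 1 else if Sum.inr (Sum.inr k) ∈ I then 2 else 3 :=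
  calc (tabA2 a b I).2 k
      = (fun n : ℕ => if n = 0 then (3 : ℕ) else if n = 1 then 2 else 1)
          (I ∩ {Sum.inr (Sum.inr k), Sum.inl (singleU k)}).ncard := rfl
    _ = _ := by
      rw [Set.ncard_inter_pair_of_imp Sum.inr_ne_inl (inr_inr_mem_of_inl_singleU_mem hI k)]
      split_ifs <;> rfl

theorem tabA2_mem_SA2 (hI : IsIdealOf (relA2 a b) I) : tabA2 a b I ∈ SA2 a b := by
  refine ⟨fun j => ?_, fun k => ?_, fun j j' hjj' => ?_, fun k k' hkk' => ?_, fun j k => ?_⟩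
  · have := inl_topU_mem_of_inr_inl_mem hI j
    rw [tabA2_fst hI]
    split_ifs <;> simp_all
  · rw [tabA2_snd hI]
    split_ifs <;> simp
  · have hu : Sum.inl (topU j') ∈ I → Sum.inl (topU j) ∈ I := inl_mem_of_le hI hjj'
    have ht := inr_inl_mem_of_le hI hjj'
    rw [tabA2_fst hI, tabA2_fst hI]
    split_ifs <;> simp_all
  · have hu : Sum.inl (singleU k') ∈ I → Sum.inl (singleU k) ∈ I :=
      inl_mem_of_le hI (Nat.add_le_add_left hkk' b)
    have hw := inr_inr_mem_of_le hI hkk'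
    rw [tabA2_snd hI, tabA2_snd hI]
    split_ifs <;> simp_all
  · have hu : Sum.inl (singleU k) ∈ I → Sum.inl (topU j) ∈ I :=
      inl_mem_of_le hI (Fin.le_def.2 (by dsimp only [topU, singleU]; omega))
    rw [tabA2_fst hI, tabA2_snd hI]
    split_ifs <;> simp_all

theorem idealOfTab_tabA2 (hI : IsIdealOf (relA2 a b) I) : idealOfTab (tabA2 a b I) = I := by
  ext (i | j | k)
  · obtain ⟨j, rfl⟩ | ⟨k, rfl⟩ := eq_topU_or_eq_singleU i
    · rw [inl_mem_idealOfTab, firstRow_topU, tabA2_fst hI]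
      split_ifs <;> simp_all
    · have := inr_inr_mem_of_inl_singleU_mem hI k
      rw [inl_mem_idealOfTab, firstRow_singleU, tabA2_snd hI]
      split_ifs <;> simp_all
  · rw [inr_inl_mem_idealOfTab, tabA2_fst hI]
    split_ifs <;> simp_all
  · have := inr_inr_mem_of_inl_singleU_mem hI k
    rw [inr_inr_mem_idealOfTab, tabA2_snd hI]
    split_ifs <;> simp_all

end Ideal

theorem tabA2_idealOfTab {T : TabT a b} (hT : T ∈ SA2 a b) : tabA2 a b (idealOfTab T) = T := by
  have hI := isIdealOf_idealOfTab hT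
  obtain ⟨hCol, hSingle, -⟩ := hT
  refine Prod.ext (funext fun j => ?_) (funext fun k => ?_)
  · have := hCol j
    rw [tabA2_fst hI, inl_mem_idealOfTab, inr_inl_mem_idealOfTab, firstRow_topU]
    ext <;> split_ifs <;> dsimp only <;> omega
  · have := hSingle k
    rw [tabA2_snd hI, inl_mem_idealOfTab, inr_inr_mem_idealOfTab, firstRow_singleU]
    split_ifs <;> omega

end A2

/-- The map `I ↦ tableau(I)` is a bijection from the set of order ideals of the
`A2`-semistandard poset `P_A2^{βα}(a,b)` onto the set `S_A2(a,b)` of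
`A2`-semistandard tableaux of shape `(a,b)`. -/
theorem A2_ideals_biject_with_tableaux (a b : ℕ) :
    Set.BijOn (tabA2 a b) {I : Set (VA2 a b) | IsIdealOf (relA2 a b) I} (SA2 a b) :=
  Set.InvOn.bijOn ⟨fun _ hI => A2.idealOfTab_tabA2 hI, fun _ hT => A2.tabA2_idealOfTab hT⟩
    (fun _ hI => A2.tabA2_mem_SA2 hI) (fun _ hT => A2.isIdealOf_idealOfTab hT)
end
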